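/- arXiv:1607.05507 — 3 statements merged into one kernel-verified Lean document; each statement's English description precedes it below -/
import Mathlib

section
/- For ε, δ ∈ (0,1) and n ≥ 1, if N ≥ (e/(e-1)) · (1/ε) · (ln(1/δ) + n - 1), then ∑_{i=0}^{n-1} C(N,i) ε^i (1-ε)^{N-i} ≤ δ, where C(N,i) is the binomial coefficient and e is Euler's number. -/
open Real

/-- Sample complexity bound for the scenario approach: if
`N ≥ (e/(e-1)) (1/ε) (ln(1/δ) + n - 1)` then the binomial tail
`∑_{i=0}^{n-1} C(N,i) ε^i (1-ε)^{N-i}` is at most `δ`. -/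
theorem stmt_1 (ε δ : ℝ) (hε : ε ∈ Set.Ioo (0:ℝ) 1) (hδ : δ ∈ Set.Ioo (0:ℝ) 1)
    (n N : ℕ) (hn : 1 ≤ n)
    (hN : (N : ℝ) ≥ (Real.exp 1 / (Real.exp 1 - 1)) * (1 / ε) *
      (Real.log (1 / δ) + n - 1)) :
    ∑ i ∈ Finset.range n, (N.choose i : ℝ) * ε ^ i * (1 - ε) ^ (N - i) ≤ δ := by
  obtain ⟨hε0, hε1⟩ := hε
  obtain ⟨hδ0, hδ1⟩ := hδ
  have he1 : (1:ℝ) < Real.exp 1 := by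
    have := Real.add_one_lt_exp (x := 1) one_ne_zero
    linarith
  have he0 : (0:ℝ) < Real.exp 1 := by linarith
  set E := Real.exp 1 with hE
  set g : ℕ → ℝ := fun i => (N.choose i : ℝ) * (ε / E) ^ i * (1 - ε) ^ (N - i) with hg
  have hgnn : ∀ i, 0 ≤ g i := by
    intro i
    apply mul_nonneg (mul_nonneg (Nat.cast_nonneg _) (pow_nonneg (by positivity) _))
    exact pow_nonneg (by linarith) _
  -- step 1: termwise bound
  have step1 : ∑ i ∈ Finset.range n, (N.choose i : ℝ) * ε ^ i * (1 - ε) ^ (N - i)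
      ≤ E ^ (n-1) * ∑ i ∈ Finset.range n, g i := by
    rw [Finset.mul_sum]
    apply Finset.sum_le_sum
    intro i hi
    have hin : i ≤ n - 1 := Nat.le_sub_one_of_lt (Finset.mem_range.mp hi)
    have h1 : E ^ i ≤ E ^ (n-1) := pow_le_pow_right₀ he1.le hin
    have : E ^ (n-1) * g i = ((N.choose i : ℝ) * ε ^ i * (1 - ε) ^ (N - i)) * (E ^ (n-1) / E ^ i) := by
      rw [hg]
      field_simp
      ring_nf; rw [mul_assoc, ← mul_pow, mul_inv_cancel₀ he0.ne', one_pow, mul_one]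
    rw [this]
    nth_rewrite 1 [← mul_one ((N.choose i : ℝ) * ε ^ i * (1 - ε) ^ (N - i))]
    apply mul_le_mul_of_nonneg_left _ (mul_nonneg (mul_nonneg (Nat.cast_nonneg _) (pow_nonneg hε0.le _)) (pow_nonneg (by linarith) _))
    rw [le_div_iff₀ (by positivity)]
    simpa using h1
  -- step 2: extend sum and binomial theorem
  have step2 : ∑ i ∈ Finset.range n, g i ≤ (ε / E + (1 - ε)) ^ N := by
    have hsub : Finset.range n ⊆ Finset.range (max n (N+1)) :=
      Finset.range_subset_range.mpr (le_max_left _ _)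
    have h1 : ∑ i ∈ Finset.range n, g i ≤ ∑ i ∈ Finset.range (max n (N+1)), g i :=
      Finset.sum_le_sum_of_subset_of_nonneg hsub (fun i _ _ => hgnn i)
    have h2 : ∑ i ∈ Finset.range (max n (N+1)), g i = ∑ i ∈ Finset.range (N+1), g i := by
      symm
      apply Finset.sum_subset (Finset.range_subset_range.mpr (le_max_right _ _))
      intro i _ hi
      have : N < i := by simpa using Nat.lt_of_lt_of_le (Nat.lt_of_not_le (by simpa using hi)) le_rfl
      simp [hg, Nat.choose_eq_zero_of_lt this]
    have h3 : ∑ i ∈ Finset.range (N+1), g i = (ε / E + (1 - ε)) ^ N := by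
      rw [add_pow]
      apply Finset.sum_congr rfl
      intro i _
      rw [hg]; ring
    linarith [h1, h2.le, h3.le]
  -- step 3: (1-c)^N ≤ exp(-c N)
  set c : ℝ := ε * (1 - 1/E) with hc
  have hcval : ε / E + (1 - ε) = 1 - c := by rw [hc]; field_simp; ring
  have hc0 : 0 < c := by
    apply mul_pos hε0
    have : 1/E < 1 := by rw [div_lt_one he0]; exact he1
    linarith
  have hc1 : c < 1 := by
    have h1 : 1 - 1/E < 1 := by
      have : 0 < 1/E := by positivity
      linarith
    calc c < ε * 1 := by apply mul_lt_mul_of_pos_left h1 hε0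
    _ = ε := mul_one ε
    _ < 1 := hε1
  have step3 : (1 - c) ^ N ≤ Real.exp (-(c * N)) := by
    have h1 : 1 - c ≤ Real.exp (-c) := by
      have := Real.add_one_le_exp (-c)
      linarith
    calc (1 - c) ^ N ≤ (Real.exp (-c)) ^ N :=
          pow_le_pow_left₀ (by linarith) h1 N
      _ = Real.exp (-(c * N)) := by
          rw [← Real.exp_nat_mul]; ring_nf
  -- step 4: final exponent comparison
  have hcast : ((n - 1 : ℕ) : ℝ) = (n : ℝ) - 1 := by
    rw [Nat.cast_sub hn]; simp
  have hEpow : E ^ (n-1) = Real.exp ((n:ℝ) - 1) := by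
    rw [hE, ← Real.exp_nat_mul, mul_one, hcast]
  have hlog : Real.log (1/δ) = -Real.log δ := by
    rw [one_div, Real.log_inv]
  have key : (n:ℝ) - 1 - c * N ≤ Real.log δ := by
    have hεE : c = ε * (E - 1) / E := by rw [hc]; field_simp
    have hE1 : 0 < E - 1 := by linarith
    have hN' : c * N ≥ Real.log (1/δ) + n - 1 := by
      rw [hεE]
      have := mul_le_mul_of_nonneg_left hN (le_of_lt (by positivity : (0:ℝ) < ε * (E - 1) / E))
      calc ε * (E - 1) / E * N ≥ ε * (E - 1) / E * ((E / (E - 1)) * (1 / ε) * (Real.log (1 / δ) + (n:ℝ) - 1)) := this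
        _ = Real.log (1 / δ) + (n:ℝ) - 1 := by field_simp
    rw [hlog] at hN'
    linarith
  calc ∑ i ∈ Finset.range n, (N.choose i : ℝ) * ε ^ i * (1 - ε) ^ (N - i)
      ≤ E ^ (n-1) * ∑ i ∈ Finset.range n, g i := step1
    _ ≤ E ^ (n-1) * (ε / E + (1 - ε)) ^ N := by
        apply mul_le_mul_of_nonneg_left step2 (by positivity)
    _ = Real.exp ((n:ℝ) - 1) * (1 - c) ^ N := by rw [hEpow, hcval]
    _ ≤ Real.exp ((n:ℝ) - 1) * Real.exp (-(c * N)) := by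
        apply mul_le_mul_of_nonneg_left step3 (Real.exp_pos _).le
    _ = Real.exp ((n:ℝ) - 1 - c * N) := by rw [← Real.exp_add]; ring_nf
    _ ≤ Real.exp (Real.log δ) := Real.exp_le_exp.mpr key
    _ = δ := Real.exp_log hδ0
end

section
/- (Robbins–Siegmund supermartingale convergence) Let (y^k), (z^k), (w^k), (v^k) be nonnegative sequences of random variables adapted to a filtration (F^k) such that E[y^{k+1} | F^k] ≤ (1 + v^k) y^k − z^k + w^k for all k, and ∑_k w^k < ∞ and ∑_k v^k < ∞ almost surely. Then (y^k) converges almost surely to a nonnegative random variable, and ∑_k z^k < ∞ almost surely. -/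
open MeasureTheory Filter Finset
open scoped ENNReal NNReal


section RS
variable {Ω : Type*}

/-- Accumulated product `∏_{j<k} (1 + v j)`. -/
noncomputable def rsA (v : ℕ → Ω → ℝ) (k : ℕ) (ω : Ω) : ℝ :=
  ∏ j ∈ Finset.range k, (1 + v j ω)

noncomputable def rsY (y v : ℕ → Ω → ℝ) (k : ℕ) (ω : Ω) : ℝ := y k ω / rsA v k ω
noncomputable def rsZ (z v : ℕ → Ω → ℝ) (k : ℕ) (ω : Ω) : ℝ := z k ω / rsA v (k + 1) ω
noncomputable def rsW (w v : ℕ → Ω → ℝ) (k : ℕ) (ω : Ω) : ℝ := w k ω / rsA v (k + 1) ω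

/-- "Still running" predicate for stopping level `c`. -/
def rsP (w v : ℕ → Ω → ℝ) (c : ℝ) (k : ℕ) (ω : Ω) : Prop :=
  rsA v (k + 1) ω ≤ c ∧ ∑ j ∈ Finset.range (k + 1), rsW w v j ω ≤ c

open Classical in
/-- Stopped supermartingale. -/
noncomputable def rsU (y z w v : ℕ → Ω → ℝ) (c : ℝ) : ℕ → Ω → ℝ
  | 0 => y 0
  | k + 1 => fun ω => rsU y z w v c k ω +
      if rsP w v c k ω then
        rsY y v (k + 1) ω - rsY y v k ω + rsZ z v k ω - rsW w v k ω else 0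

noncomputable def rsX (y z w v : ℕ → Ω → ℝ) (k : ℕ) (ω : Ω) : ℝ :=
  rsY y v k ω + ∑ j ∈ Finset.range k, rsZ z v j ω - ∑ j ∈ Finset.range k, rsW w v j ω

variable {v : ℕ → Ω → ℝ}

theorem rsA_zero (ω : Ω) : rsA v 0 ω = 1 := by simp [rsA]

theorem rsA_succ (k : ℕ) (ω : Ω) : rsA v (k + 1) ω = rsA v k ω * (1 + v k ω) :=
  Finset.prod_range_succ _ _

theorem one_le_rsA (hv : ∀ k ω, 0 ≤ v k ω) (k : ℕ) (ω : Ω) : 1 ≤ rsA v k ω := by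
  induction k with
  | zero => simp [rsA]
  | succ k ih => rw [rsA_succ]; nlinarith [hv k ω]

theorem rsA_pos (hv : ∀ k ω, 0 ≤ v k ω) (k : ℕ) (ω : Ω) : 0 < rsA v k ω :=
  lt_of_lt_of_le one_pos (one_le_rsA hv k ω)

theorem rsA_mono (hv : ∀ k ω, 0 ≤ v k ω) {k m : ℕ} (h : k ≤ m) (ω : Ω) :
    rsA v k ω ≤ rsA v m ω := by
  induction m with
  | zero => simpa using (Nat.le_zero.mp h) ▸ le_refl _
  | succ m ih =>
    rcases Nat.lt_or_ge k (m+1) with h' | h'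
    · have := ih (Nat.lt_succ_iff.mp h')
      rw [rsA_succ]
      nlinarith [rsA_pos hv m ω, hv m ω]
    · have : k = m + 1 := le_antisymm h h'
      simp [this]


section Meas
variable {mΩ : MeasurableSpace Ω} {F : Filtration ℕ mΩ} {y z w v : ℕ → Ω → ℝ}

theorem rsA_sm (hv : Adapted F v) {k n : ℕ} (h : k ≤ n + 1) :
    StronglyMeasurable[F n] (rsA v k) := by
  unfold rsA
  refine Finset.stronglyMeasurable_fun_prod _ fun j hj => ?_
  have hj' : j ≤ n := by simp only [Finset.mem_range] at hj; omega
  exact stronglyMeasurable_const.add ((hv j).mono (F.mono hj') le_rfl).stronglyMeasurable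

theorem rsY_sm (hy : Adapted F y) (hv : Adapted F v) (k : ℕ) :
    StronglyMeasurable[F k] (rsY y v k) :=
  ((hy k).div (rsA_sm hv k.le_succ).measurable).stronglyMeasurable

theorem rsW_sm (hw : Adapted F w) (hv : Adapted F v) {k n : ℕ} (h : k ≤ n) :
    StronglyMeasurable[F n] (rsW w v k) :=
  (((hw k).mono (F.mono h) le_rfl).div (rsA_sm hv (by omega)).measurable).stronglyMeasurable

theorem rsZ_sm (hz : Adapted F z) (hv : Adapted F v) {k n : ℕ} (h : k ≤ n) :
    StronglyMeasurable[F n] (rsZ z v k) :=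
  (((hz k).mono (F.mono h) le_rfl).div (rsA_sm hv (by omega)).measurable).stronglyMeasurable

theorem rsP_ms (hw : Adapted F w) (hv : Adapted F v) (c : ℝ) (k : ℕ) :
    MeasurableSet[F k] {ω | rsP w v c k ω} := by
  have h1 : MeasurableSet[F k] {ω | rsA v (k + 1) ω ≤ c} :=
    measurableSet_le (rsA_sm hv le_rfl).measurable measurable_const
  have h2 : MeasurableSet[F k] {ω | ∑ j ∈ Finset.range (k + 1), rsW w v j ω ≤ c} := by
    refine measurableSet_le ?_ measurable_const
    exact Finset.measurable_sum _ fun j hj =>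
      (rsW_sm hw hv (by simp only [Finset.mem_range] at hj; omega)).measurable
  exact h1.inter h2

end Meas

section Pointwise
variable {y z w v : ℕ → Ω → ℝ}

theorem rsY_nonneg (hy : ∀ k ω, 0 ≤ y k ω) (hv : ∀ k ω, 0 ≤ v k ω) (k : ℕ) (ω : Ω) :
    0 ≤ rsY y v k ω := div_nonneg (hy k ω) (rsA_pos hv k ω).le

theorem rsY_le (hy : ∀ k ω, 0 ≤ y k ω) (hv : ∀ k ω, 0 ≤ v k ω) (k : ℕ) (ω : Ω) :
    rsY y v k ω ≤ y k ω := div_le_self (hy k ω) (one_le_rsA hv k ω)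

theorem rsW_nonneg (hw : ∀ k ω, 0 ≤ w k ω) (hv : ∀ k ω, 0 ≤ v k ω) (k : ℕ) (ω : Ω) :
    0 ≤ rsW w v k ω := div_nonneg (hw k ω) (rsA_pos hv _ ω).le

theorem rsW_le (hw : ∀ k ω, 0 ≤ w k ω) (hv : ∀ k ω, 0 ≤ v k ω) (k : ℕ) (ω : Ω) :
    rsW w v k ω ≤ w k ω := div_le_self (hw k ω) (one_le_rsA hv _ ω)

theorem rsZ_nonneg (hz : ∀ k ω, 0 ≤ z k ω) (hv : ∀ k ω, 0 ≤ v k ω) (k : ℕ) (ω : Ω) :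
    0 ≤ rsZ z v k ω := div_nonneg (hz k ω) (rsA_pos hv _ ω).le

theorem rsW_le_of_rsP (hw : ∀ k ω, 0 ≤ w k ω) (hv : ∀ k ω, 0 ≤ v k ω) {c : ℝ} {k : ℕ} {ω : Ω}
    (h : rsP w v c k ω) : rsW w v k ω ≤ c := by
  refine le_trans ?_ h.2
  exact Finset.single_le_sum (f := fun j => rsW w v j ω)
    (fun j _ => rsW_nonneg hw hv j ω) (Finset.self_mem_range_succ k)

theorem rsP_mono (hw : ∀ k ω, 0 ≤ w k ω) (hv : ∀ k ω, 0 ≤ v k ω) {c : ℝ} {k : ℕ} {ω : Ω}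
    (h : rsP w v c (k + 1) ω) : rsP w v c k ω := by
  obtain ⟨h1, h2⟩ := h
  refine ⟨le_trans (rsA_mono hv (by omega) ω) h1, le_trans ?_ h2⟩
  refine Finset.sum_le_sum_of_subset_of_nonneg (Finset.range_subset_range.2 (by omega)) ?_
  exact fun j _ _ => rsW_nonneg hw hv j ω

open Classical in
theorem rsU_succ (c : ℝ) (k : ℕ) (ω : Ω) :
    rsU y z w v c (k + 1) ω = rsU y z w v c k ω +
      (if rsP w v c k ω then
        rsY y v (k + 1) ω - rsY y v k ω + rsZ z v k ω - rsW w v k ω else 0) := rfl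

theorem rsU_zero (c : ℝ) (ω : Ω) : rsU y z w v c 0 ω = y 0 ω := rfl

theorem rsU_eq_rsX (hw : ∀ k ω, 0 ≤ w k ω) (hv : ∀ k ω, 0 ≤ v k ω) {c : ℝ} {k : ℕ} {ω : Ω}
    (h : rsP w v c k ω) : rsU y z w v c (k + 1) ω = rsX y z w v (k + 1) ω := by
  induction k with
  | zero =>
    rw [rsU_succ, if_pos h, rsU_zero]
    simp only [rsX, Finset.sum_range_succ, Finset.sum_range_zero, rsY, rsA_zero]
    ring
  | succ k ih =>
    rw [rsU_succ, if_pos h, ih (rsP_mono hw hv h)]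
    simp only [rsX, Finset.sum_range_succ]
    ring

theorem neg_le_rsU (hy : ∀ k ω, 0 ≤ y k ω) (hz : ∀ k ω, 0 ≤ z k ω)
    (hw : ∀ k ω, 0 ≤ w k ω) (hv : ∀ k ω, 0 ≤ v k ω) {c : ℝ} (hc : 0 ≤ c) (k : ℕ) (ω : Ω) :
    -c ≤ rsU y z w v c k ω := by
  induction k with
  | zero => rw [rsU_zero]; linarith [hy 0 ω]
  | succ k ih =>
    by_cases h : rsP w v c k ω
    · rw [rsU_eq_rsX hw hv h]
      have h1 : 0 ≤ rsY y v (k + 1) ω := rsY_nonneg hy hv _ ω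
      have h2 : 0 ≤ ∑ j ∈ Finset.range (k + 1), rsZ z v j ω :=
        Finset.sum_nonneg fun j _ => rsZ_nonneg hz hv j ω
      have h3 : ∑ j ∈ Finset.range (k + 1), rsW w v j ω ≤ c := h.2
      simp only [rsX]; linarith
    · rw [rsU_succ, if_neg h]; linarith

end Pointwise

section PerC
open Classical
variable {mΩ : MeasurableSpace Ω} {μ : MeasureTheory.Measure Ω}

theorem rsU_ae_conv [IsProbabilityMeasure μ] (F : Filtration ℕ mΩ)
    (y z w v : ℕ → Ω → ℝ)
    (hy0 : ∀ k ω, 0 ≤ y k ω) (hz0 : ∀ k ω, 0 ≤ z k ω)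
    (hw0 : ∀ k ω, 0 ≤ w k ω) (hv0 : ∀ k ω, 0 ≤ v k ω)
    (hy : Adapted F y) (hz : Adapted F z) (hw : Adapted F w) (hv : Adapted F v)
    (hint : ∀ k, Integrable (y k) μ)
    (hrec : ∀ k, ∀ᵐ ω ∂μ,
      (μ[y (k + 1) | F k]) ω ≤ (1 + v k ω) * y k ω - z k ω + w k ω)
    (C : ℝ) (hC : 0 ≤ C) :
    ∀ᵐ ω ∂μ, ∃ l, Tendsto (fun k => rsU y z w v C k ω) atTop (nhds l) := by
  -- a.e. bound on the rescaled z
  have hzt_ae : ∀ k, ∀ᵐ ω ∂μ, rsZ z v k ω ≤ rsY y v k ω + rsW w v k ω := by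
    intro k
    have hcn : (0 : Ω → ℝ) ≤ᵐ[μ] μ[y (k + 1) | F k] :=
      condExp_nonneg (Filter.Eventually.of_forall fun ω => hy0 (k + 1) ω)
    filter_upwards [hrec k, hcn] with ω h1 h2
    have hzb : z k ω ≤ (1 + v k ω) * y k ω + w k ω := by
      simp only [Pi.zero_apply] at h2; linarith
    have hApos := rsA_pos hv0 (k + 1) ω
    have hAk := rsA_pos hv0 k ω
    have hvp : (0 : ℝ) < 1 + v k ω := by linarith [hv0 k ω]
    have heq : ((1 + v k ω) * y k ω + w k ω) / rsA v (k + 1) ω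
        = rsY y v k ω + rsW w v k ω := by
      unfold rsY rsW
      rw [rsA_succ]
      field_simp
    calc rsZ z v k ω = z k ω / rsA v (k + 1) ω := rfl
      _ ≤ ((1 + v k ω) * y k ω + w k ω) / rsA v (k + 1) ω := by gcongr
      _ = _ := heq
  -- the increment
  set D : ℕ → Ω → ℝ := fun k ω =>
    if rsP w v C k ω then
      rsY y v (k + 1) ω - rsY y v k ω + rsZ z v k ω - rsW w v k ω else 0 with hD
  have hDsm : ∀ k, StronglyMeasurable[F (k + 1)] (D k) := by
    intro k
    refine StronglyMeasurable.ite (F.mono k.le_succ _ (rsP_ms hw hv C k)) ?_ ?_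
    · exact (((rsY_sm hy hv (k + 1)).sub ((rsY_sm hy hv k).mono (F.mono k.le_succ))).add
        (rsZ_sm hz hv k.le_succ)).sub (rsW_sm hw hv k.le_succ)
    · exact stronglyMeasurable_const
  have hDae : ∀ k, ∀ᵐ ω ∂μ, ‖D k ω‖ ≤ y (k + 1) ω + 2 * y k ω + 2 * C := by
    intro k
    filter_upwards [hzt_ae k] with ω hztb
    by_cases h : rsP w v C k ω
    · have b1 := rsY_nonneg hy0 hv0 (k + 1) ω
      have b2 := rsY_le hy0 hv0 (k + 1) ω
      have b3 := rsY_nonneg hy0 hv0 k ω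
      have b4 := rsY_le hy0 hv0 k ω
      have b5 := rsZ_nonneg hz0 hv0 k ω
      have b6 := rsW_nonneg hw0 hv0 k ω
      have b7 := rsW_le_of_rsP hw0 hv0 h
      rw [hD]; simp only [if_pos h, Real.norm_eq_abs, abs_le]
      constructor <;> nlinarith
    · rw [hD]; simp only [if_neg h, norm_zero]
      nlinarith [hy0 (k + 1) ω, hy0 k ω]
  have hgint : ∀ k, Integrable (fun ω => y (k + 1) ω + 2 * y k ω + 2 * C) μ :=
    fun k => (((hint (k + 1)).add ((hint k).const_mul 2)).add (integrable_const _))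
  have hDint : ∀ k, Integrable (D k) μ := fun k =>
    Integrable.mono' (hgint k) ((hDsm k).mono (F.le _)).aestronglyMeasurable (hDae k)
  -- U is adapted and integrable
  have hUsm : ∀ k, StronglyMeasurable[F k] (rsU y z w v C k) := by
    intro k
    induction k with
    | zero => exact (hy 0).stronglyMeasurable
    | succ k ih =>
      have : rsU y z w v C (k + 1) = fun ω => rsU y z w v C k ω + D k ω := rfl
      rw [this]
      exact (ih.mono (F.mono k.le_succ)).add (hDsm k)
  have hUint : ∀ k, Integrable (rsU y z w v C k) μ := by
    intro k
    induction k with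
    | zero => exact hint 0
    | succ k ih =>
      have : rsU y z w v C (k + 1) = fun ω => rsU y z w v C k ω + D k ω := rfl
      rw [this]
      exact ih.add (hDint k)
  -- supermartingale step
  have hstep : ∀ k, μ[rsU y z w v C (k + 1) | F k] ≤ᵐ[μ] rsU y z w v C k := by
    intro k
    set e : Ω → ℝ := fun ω => if rsP w v C k ω then (rsA v (k + 1) ω)⁻¹ else 0 with he
    set r : Ω → ℝ := fun ω =>
      if rsP w v C k ω then rsY y v k ω - rsZ z v k ω + rsW w v k ω else 0 with hr
    have hesm : StronglyMeasurable[F k] e :=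
      StronglyMeasurable.ite (rsP_ms hw hv C k)
        ((rsA_sm hv le_rfl).measurable.inv.stronglyMeasurable) stronglyMeasurable_const
    have hebd : ∀ ω, ‖e ω‖ ≤ 1 := by
      intro ω
      rw [he]; by_cases h : rsP w v C k ω
      · simp only [if_pos h, Real.norm_eq_abs]
        rw [abs_of_nonneg (inv_nonneg.2 (rsA_pos hv0 _ ω).le)]
        exact inv_le_one_of_one_le₀ (one_le_rsA hv0 _ ω)
      · simp [if_neg h]
    have hrsm : StronglyMeasurable[F k] r :=
      StronglyMeasurable.ite (rsP_ms hw hv C k)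
        (((rsY_sm hy hv k).sub (rsZ_sm hz hv le_rfl)).add (rsW_sm hw hv le_rfl))
        stronglyMeasurable_const
    have hrae : ∀ᵐ ω ∂μ, ‖r ω‖ ≤ 2 * y k ω + 2 * C := by
      filter_upwards [hzt_ae k] with ω hztb
      rw [hr]; by_cases h : rsP w v C k ω
      · have b3 := rsY_nonneg hy0 hv0 k ω
        have b4 := rsY_le hy0 hv0 k ω
        have b5 := rsZ_nonneg hz0 hv0 k ω
        have b6 := rsW_nonneg hw0 hv0 k ω
        have b7 := rsW_le_of_rsP hw0 hv0 h
        simp only [if_pos h, Real.norm_eq_abs, abs_le]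
        constructor <;> nlinarith
      · simp only [if_neg h, norm_zero]; nlinarith [hy0 k ω]
    have hrint : Integrable r μ := Integrable.mono'
      (((hint k).const_mul 2).add (integrable_const _))
      (hrsm.mono (F.le _)).aestronglyMeasurable hrae
    have heyint : Integrable (e * y (k + 1)) μ := by
      refine Integrable.mono' (hint (k + 1))
        ((hesm.mono (F.le _)).aestronglyMeasurable.mul (hint (k + 1)).1) ?_
      refine Filter.Eventually.of_forall fun ω => ?_
      calc ‖e ω * y (k + 1) ω‖ = ‖e ω‖ * ‖y (k + 1) ω‖ := norm_mul _ _
        _ ≤ 1 * ‖y (k + 1) ω‖ := by gcongr; exact hebd ω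
        _ = y (k + 1) ω := by rw [one_mul, Real.norm_eq_abs, abs_of_nonneg (hy0 _ ω)]
    have hDeq : D k = e * y (k + 1) - r := by
      funext ω
      simp only [Pi.sub_apply, Pi.mul_apply, hD, he, hr]
      by_cases h : rsP w v C k ω
      · simp only [if_pos h]
        rw [show rsY y v (k + 1) ω = (rsA v (k + 1) ω)⁻¹ * y (k + 1) ω by
          rw [rsY, inv_mul_eq_div]]
        ring
      · simp [if_neg h]
    have hUdec : rsU y z w v C (k + 1) = rsU y z w v C k + (e * y (k + 1) - r) := by
      funext ω
      have : rsU y z w v C (k + 1) ω = rsU y z w v C k ω + D k ω := rfl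
      rw [this, hDeq]
      rfl
    have h1 : μ[rsU y z w v C (k + 1) | F k]
        =ᵐ[μ] μ[rsU y z w v C k | F k] + μ[e * y (k + 1) - r | F k] := by
      rw [hUdec]
      exact condExp_add (hUint k) (heyint.sub hrint) _
    have h2 : μ[e * y (k + 1) - r | F k] =ᵐ[μ] μ[e * y (k + 1) | F k] - μ[r | F k] :=
      condExp_sub heyint hrint _
    have h3 : μ[rsU y z w v C k | F k] = rsU y z w v C k :=
      condExp_of_stronglyMeasurable (F.le k) (hUsm k) (hUint k)
    have h4 : μ[e * y (k + 1) | F k] =ᵐ[μ] e * μ[y (k + 1) | F k] :=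
      condExp_stronglyMeasurable_mul_of_bound (F.le k) hesm (hint (k + 1)) 1
        (Filter.Eventually.of_forall hebd)
    have h5 : μ[r | F k] = r :=
      condExp_of_stronglyMeasurable (F.le k) hrsm hrint
    filter_upwards [h1, h2, h4, hrec k] with ω e1 e2 e4 erec
    rw [e1]
    simp only [Pi.add_apply]
    rw [e2, h3, h5]
    simp only [Pi.sub_apply, Pi.mul_apply]
    rw [e4]
    simp only [Pi.mul_apply]
    have key : e ω * (μ[y (k + 1) | F k]) ω ≤ r ω := by
      rw [he, hr]
      by_cases h : rsP w v C k ω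
      · simp only [if_pos h]
        have hApos := rsA_pos hv0 (k + 1) ω
        have hAk := rsA_pos hv0 k ω
        have hvp : (0 : ℝ) < 1 + v k ω := by linarith [hv0 k ω]
        have step1 : (rsA v (k + 1) ω)⁻¹ * (μ[y (k + 1) | F k]) ω
            ≤ (rsA v (k + 1) ω)⁻¹ * ((1 + v k ω) * y k ω - z k ω + w k ω) :=
          mul_le_mul_of_nonneg_left erec (inv_nonneg.2 hApos.le)
        refine step1.trans (le_of_eq ?_)
        unfold rsY rsZ rsW
        rw [rsA_succ]
        field_simp
      · simp [if_neg h]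
    linarith
  -- supermartingale and L¹ bound
  have hsuper : Supermartingale (rsU y z w v C) F μ :=
    supermartingale_nat (fun k => hUsm k) hUint hstep
  have hImono : ∀ k, ∫ ω, rsU y z w v C k ω ∂μ ≤ ∫ ω, y 0 ω ∂μ := by
    intro k
    induction k with
    | zero => exact le_of_eq rfl
    | succ k ih =>
      calc ∫ ω, rsU y z w v C (k + 1) ω ∂μ
          = ∫ ω, (μ[rsU y z w v C (k + 1) | F k]) ω ∂μ := (integral_condExp (F.le k)).symm
        _ ≤ ∫ ω, rsU y z w v C k ω ∂μ :=
            integral_mono_ae integrable_condExp (hUint k) (hstep k)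
        _ ≤ _ := ih
  have hL1 : ∀ k, eLpNorm (rsU y z w v C k) 1 μ
      ≤ ENNReal.ofReal (∫ ω, y 0 ω ∂μ + 2 * C) := by
    intro k
    have habs : ∀ ω, ‖rsU y z w v C k ω‖ ≤ rsU y z w v C k ω + 2 * C := by
      intro ω
      have := neg_le_rsU hy0 hz0 hw0 hv0 hC k ω
      rw [Real.norm_eq_abs, abs_le]; constructor <;> linarith
    have hle : ∫ ω, ‖rsU y z w v C k ω‖ ∂μ ≤ ∫ ω, y 0 ω ∂μ + 2 * C := by
      calc ∫ ω, ‖rsU y z w v C k ω‖ ∂μ ≤ ∫ ω, (rsU y z w v C k ω + 2 * C) ∂μ :=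
            integral_mono_ae (hUint k).norm ((hUint k).add (integrable_const _))
              (Filter.Eventually.of_forall habs)
        _ = ∫ ω, rsU y z w v C k ω ∂μ + 2 * C := by
            rw [integral_add (hUint k) (integrable_const _), integral_const]
            simp [measure_univ]
        _ ≤ _ := by linarith [hImono k]
    calc eLpNorm (rsU y z w v C k) 1 μ = ∫⁻ ω, ‖rsU y z w v C k ω‖ₑ ∂μ :=
          eLpNorm_one_eq_lintegral_enorm
      _ = ENNReal.ofReal (∫ ω, ‖rsU y z w v C k ω‖ ∂μ) :=
          (ofReal_integral_norm_eq_lintegral_enorm (hUint k)).symm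
      _ ≤ _ := ENNReal.ofReal_le_ofReal hle
  -- convergence
  have hneg : Submartingale (-rsU y z w v C) F μ := hsuper.neg
  have hbdd : ∀ k, eLpNorm ((-rsU y z w v C) k) 1 μ
      ≤ ((∫ ω, y 0 ω ∂μ + 2 * C).toNNReal : ℝ≥0∞) := by
    intro k
    have : (-rsU y z w v C) k = -(rsU y z w v C k) := rfl
    rw [this, eLpNorm_neg]
    exact (hL1 k).trans (le_of_eq rfl)
  filter_upwards [hneg.exists_ae_tendsto_of_bdd hbdd] with ω ⟨l, hl⟩
  refine ⟨-l, ?_⟩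
  have := hl.neg
  simp only [Pi.neg_apply, neg_neg] at this ⊢
  exact this

end PerC
end RS

/-- Robbins–Siegmund supermartingale convergence theorem. -/
theorem stmt_7 {Ω : Type*} {mΩ : MeasurableSpace Ω} {μ : Measure Ω}
    [IsProbabilityMeasure μ] (F : Filtration ℕ mΩ)
    (y z w v : ℕ → Ω → ℝ)
    (hy0 : ∀ k, 0 ≤ y k) (hz0 : ∀ k, 0 ≤ z k)
    (hw0 : ∀ k, 0 ≤ w k) (hv0 : ∀ k, 0 ≤ v k)
    (hy : Adapted F y) (hz : Adapted F z) (hw : Adapted F w) (hv : Adapted F v)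
    (hint : ∀ k, Integrable (y k) μ)
    (hrec : ∀ k, ∀ᵐ ω ∂μ,
      (μ[y (k + 1) | F k]) ω ≤ (1 + v k ω) * y k ω - z k ω + w k ω)
    (hsumw : ∀ᵐ ω ∂μ, Summable (fun k => w k ω))
    (hsumv : ∀ᵐ ω ∂μ, Summable (fun k => v k ω)) :
    ∀ᵐ ω ∂μ, (∃ L : ℝ, 0 ≤ L ∧ Tendsto (fun k => y k ω) atTop (nhds L)) ∧
      Summable (fun k => z k ω) := by
  classical
  have hy0' : ∀ k ω, 0 ≤ y k ω := fun k ω => hy0 k ω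
  have hz0' : ∀ k ω, 0 ≤ z k ω := fun k ω => hz0 k ω
  have hw0' : ∀ k ω, 0 ≤ w k ω := fun k ω => hw0 k ω
  have hv0' : ∀ k ω, 0 ≤ v k ω := fun k ω => hv0 k ω
  have main : ∀ c : ℕ, ∀ᵐ ω ∂μ,
      ∃ l, Tendsto (fun k => rsU y z w v (c : ℝ) k ω) atTop (nhds l) := fun c =>
    rsU_ae_conv F y z w v hy0' hz0' hw0' hv0' hy hz hw hv hint hrec (c : ℝ)
      (Nat.cast_nonneg c)
  filter_upwards [ae_all_iff.2 main, hsumw, hsumv] with ω hconv hsw hsv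
  -- bound on the products
  set Sv := ∑' k, v k ω with hSv
  have hAb : ∀ k, rsA v k ω ≤ Real.exp Sv := by
    intro k
    calc rsA v k ω ≤ ∏ j ∈ Finset.range k, Real.exp (v j ω) := by
          refine Finset.prod_le_prod (fun j _ => by linarith [hv0' j ω]) fun j _ => ?_
          linarith [Real.add_one_le_exp (v j ω)]
      _ = Real.exp (∑ j ∈ Finset.range k, v j ω) := (Real.exp_sum _ _).symm
      _ ≤ Real.exp Sv :=
          Real.exp_le_exp.2 (Summable.sum_le_tsum _ (fun j _ => hv0' j ω) hsv)
  have hAmonot : Monotone fun k => rsA v k ω := fun a b h => rsA_mono hv0' h ω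
  have hAbdd : BddAbove (Set.range fun k => rsA v k ω) :=
    ⟨Real.exp Sv, fun x ⟨k, hk⟩ => hk ▸ hAb k⟩
  have hAtend : Tendsto (fun k => rsA v k ω) atTop (nhds (⨆ k, rsA v k ω)) :=
    tendsto_atTop_ciSup hAmonot hAbdd
  have hwt_sum : Summable fun k => rsW w v k ω :=
    Summable.of_nonneg_of_le (fun k => rsW_nonneg hw0' hv0' k ω)
      (fun k => rsW_le hw0' hv0' k ω) hsw
  set Sw := ∑' k, rsW w v k ω with hSw
  set c : ℕ := ⌈max (Real.exp Sv) Sw⌉₊ with hc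
  have hPall : ∀ k, rsP w v (c : ℝ) k ω := by
    intro k
    refine ⟨(hAb (k + 1)).trans ((le_max_left _ _).trans (Nat.le_ceil _)), ?_⟩
    exact (Summable.sum_le_tsum _ (fun j _ => rsW_nonneg hw0' hv0' j ω) hwt_sum).trans
      ((le_max_right _ _).trans (Nat.le_ceil _))
  obtain ⟨l, hl⟩ := hconv c
  have hXU : ∀ k, rsU y z w v (c : ℝ) (k + 1) ω = rsX y z w v (k + 1) ω :=
    fun k => rsU_eq_rsX hw0' hv0' (hPall k)
  have hXtend : Tendsto (fun k => rsX y z w v k ω) atTop (nhds l) := by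
    have h1 : Tendsto (fun k => rsU y z w v (c : ℝ) (k + 1) ω) atTop (nhds l) :=
      hl.comp (tendsto_add_atTop_nat 1)
    have h2 : Tendsto (fun k => rsX y z w v (k + 1) ω) atTop (nhds l) :=
      h1.congr fun k => hXU k
    exact (tendsto_add_atTop_iff_nat 1).1 h2
  have hwpar : Tendsto (fun k => ∑ j ∈ Finset.range k, rsW w v j ω) atTop (nhds Sw) :=
    hwt_sum.hasSum.tendsto_sum_nat
  have hphi : Tendsto (fun k => rsY y v k ω + ∑ j ∈ Finset.range k, rsZ z v j ω)
      atTop (nhds (l + Sw)) := by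
    refine (hXtend.add hwpar).congr fun k => ?_
    simp only [rsX]; ring
  have hphi_bdd : BddAbove (Set.range
      fun k => rsY y v k ω + ∑ j ∈ Finset.range k, rsZ z v j ω) :=
    hphi.bddAbove_range
  obtain ⟨B, hB⟩ := hphi_bdd
  have hzt_sum : Summable fun k => rsZ z v k ω := by
    refine summable_of_sum_range_le (c := B) (fun k => rsZ_nonneg hz0' hv0' k ω) fun n => ?_
    have h1 : rsY y v n ω + ∑ j ∈ Finset.range n, rsZ z v j ω ≤ B :=
      hB ⟨n, rfl⟩
    linarith [rsY_nonneg hy0' hv0' n ω]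
  have hz_sum : Summable fun k => z k ω := by
    refine Summable.of_nonneg_of_le (fun k => hz0' k ω)
      (fun k => ?_) (hzt_sum.mul_right (Real.exp Sv))
    have hApos := rsA_pos hv0' (k + 1) ω
    calc z k ω = rsZ z v k ω * rsA v (k + 1) ω := by
          rw [rsZ, div_mul_cancel₀ _ hApos.ne']
      _ ≤ rsZ z v k ω * Real.exp Sv :=
          mul_le_mul_of_nonneg_left (hAb (k + 1)) (rsZ_nonneg hz0' hv0' k ω)
  have hzpar : Tendsto (fun k => ∑ j ∈ Finset.range k, rsZ z v j ω) atTop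
      (nhds (∑' k, rsZ z v k ω)) := hzt_sum.hasSum.tendsto_sum_nat
  have hyt : Tendsto (fun k => rsY y v k ω) atTop
      (nhds (l + Sw - ∑' k, rsZ z v k ω)) := by
    refine (hphi.sub hzpar).congr fun k => ?_
    ring
  have hy_tend : Tendsto (fun k => y k ω) atTop
      (nhds ((l + Sw - ∑' k, rsZ z v k ω) * ⨆ k, rsA v k ω)) := by
    refine (hyt.mul hAtend).congr fun k => ?_
    rw [rsY, div_mul_cancel₀ _ (rsA_pos hv0' k ω).ne']
  refine ⟨⟨_, ?_, hy_tend⟩, hz_sum⟩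
  exact ge_of_tendsto hy_tend (Eventually.of_forall fun k => hy0' k ω)
end

section
/- Let Θ ⊆ ℝ^n be closed and convex, f : ℝ^n → ℝ convex, β ∈ (0,2), and let y ∈ Θ with f(y)_+ = 0. For any v ∈ ℝ^n, set θ' = Π_Θ(v − β · (f(v)_+ / ‖d‖²) d) where d is a subgradient of f(·)_+ at v if f(v)_+ > 0 and d ≠ 0 arbitrary otherwise. Then ‖θ' − y‖² ≤ ‖v − y‖² − β(2−β) (f(v)_+)² / ‖d‖². -/
open scoped RealInnerProductSpace

lemma proj_contract {n : ℕ} {Θ : Set (EuclideanSpace ℝ (Fin n))}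
    (hconv : Convex ℝ Θ)
    (P : EuclideanSpace ℝ (Fin n) → EuclideanSpace ℝ (Fin n))
    (hP : ∀ x, P x ∈ Θ ∧ ∀ u ∈ Θ, ‖x - P x‖ ≤ ‖x - u‖)
    {y : EuclideanSpace ℝ (Fin n)} (hy : y ∈ Θ) (x : EuclideanSpace ℝ (Fin n)) :
    ‖P x - y‖ ^ 2 ≤ ‖x - y‖ ^ 2 := by
  obtain ⟨hmem, hmin⟩ := hP x
  haveI : Nonempty Θ := ⟨⟨P x, hmem⟩⟩
  have hinf : ‖x - P x‖ = ⨅ w : Θ, ‖x - w‖ := by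
    apply le_antisymm
    · exact le_ciInf fun w => hmin w w.2
    · exact ciInf_le ⟨0, fun _ ⟨w, hw⟩ => hw ▸ norm_nonneg _⟩ (⟨P x, hmem⟩ : Θ)
  have hvar : ⟪x - P x, y - P x⟫ ≤ 0 :=
    ((norm_eq_iInf_iff_real_inner_le_zero hconv hmem).mp hinf) y hy
  have : ‖x - y‖ ^ 2 = ‖x - P x‖ ^ 2 + 2 * ⟪x - P x, P x - y⟫ + ‖P x - y‖ ^ 2 := by
    have h := norm_add_sq_real (x - P x) (P x - y)
    rw [show x - P x + (P x - y) = x - y by abel] at h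
    linarith [h]
  have h2 : ⟪x - P x, P x - y⟫ = - ⟪x - P x, y - P x⟫ := by
    rw [← inner_neg_right]; congr 1; abel
  nlinarith [sq_nonneg ‖x - P x‖]

/-- Basic descent inequality of the Polyak projection step. -/
theorem stmt_8 {n : ℕ} (Θ : Set (EuclideanSpace ℝ (Fin n)))
    (hne : Θ.Nonempty) (hcl : IsClosed Θ) (hconv : Convex ℝ Θ)
    (P : EuclideanSpace ℝ (Fin n) → EuclideanSpace ℝ (Fin n))
    (hP : ∀ x, P x ∈ Θ ∧ ∀ u ∈ Θ, ‖x - P x‖ ≤ ‖x - u‖)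
    (f : EuclideanSpace ℝ (Fin n) → ℝ) (hf : ConvexOn ℝ Set.univ f)
    (β : ℝ) (hβ : β ∈ Set.Ioo (0:ℝ) 2)
    (y : EuclideanSpace ℝ (Fin n)) (hy : y ∈ Θ) (hfy : max (f y) 0 = 0)
    (v d : EuclideanSpace ℝ (Fin n)) (hd0 : d ≠ 0)
    (hsub : 0 < f v → ∀ x, max (f v) 0 + inner ℝ d (x - v) ≤ max (f x) 0) :
    ‖P (v - (β * max (f v) 0 / ‖d‖ ^ 2) • d) - y‖ ^ 2 ≤
      ‖v - y‖ ^ 2 - β * (2 - β) * (max (f v) 0) ^ 2 / ‖d‖ ^ 2 := by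
  set m : ℝ := max (f v) 0 with hm
  set α : ℝ := β * m / ‖d‖ ^ 2 with hα
  have hdn : (0:ℝ) < ‖d‖ ^ 2 := pow_pos (norm_pos_iff.mpr hd0) 2
  have key : ‖P (v - α • d) - y‖ ^ 2 ≤ ‖(v - α • d) - y‖ ^ 2 :=
    proj_contract hconv P hP hy _
  have hexp : ‖(v - α • d) - y‖ ^ 2
      = ‖v - y‖ ^ 2 - 2 * α * ⟪d, v - y⟫ + α ^ 2 * ‖d‖ ^ 2 := by
    have h := norm_sub_sq_real (v - y) (α • d)
    rw [show v - y - α • d = (v - α • d) - y by abel] at h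
    rw [h, inner_smul_right, real_inner_comm, norm_smul]
    simp [mul_pow]
    ring
  rcases le_or_gt (f v) 0 with hfv | hfv
  · have hm0 : m = 0 := max_eq_right hfv
    have hα0 : α = 0 := by rw [hα, hm0]; ring_nf
    rw [hα0, zero_smul, sub_zero] at key
    rw [hα0] at hexp
    have : ‖v - (0:ℝ) • d - y‖ ^ 2 = ‖v - y‖ ^ 2 := by rw [zero_smul, sub_zero]
    rw [zero_smul, sub_zero] at hexp
    have hz : β * (2 - β) * m ^ 2 / ‖d‖ ^ 2 = 0 := by rw [hm0]; ring_nf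
    rw [hz, hα0, zero_smul, sub_zero]
    linarith
  · have hmpos : 0 < m := lt_max_of_lt_left hfv
    have hsy := hsub hfv y
    rw [hfy] at hsy
    have hdy : m ≤ ⟪d, v - y⟫ := by
      have : (⟪d, y - v⟫ : ℝ) = - ⟪d, v - y⟫ := by
        rw [← inner_neg_right]; congr 1; abel
      rw [this] at hsy; linarith
    have hb1 : 0 < β := hβ.1
    have hb2 : β < 2 := hβ.2
    have hαpos : 0 < α := by rw [hα]; exact div_pos (mul_pos hb1 hmpos) hdn
    have hbound : ‖(v - α • d) - y‖ ^ 2 ≤ ‖v - y‖ ^ 2 - 2 * α * m + α ^ 2 * ‖d‖ ^ 2 := by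
      rw [hexp]; nlinarith
    have hfinal : ‖v - y‖ ^ 2 - 2 * α * m + α ^ 2 * ‖d‖ ^ 2
        = ‖v - y‖ ^ 2 - β * (2 - β) * m ^ 2 / ‖d‖ ^ 2 := by
      rw [hα]; field_simp; ring
    linarith [key]
end
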